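/- (Geometric lemma.) There exists a finite set $\Lambda \subset \mathbb{S}^2 \cap \mathbb{Q}^3$ and, for each $\xi \in \Lambda$, a $C^\infty$ function $\gamma_\xi : \overline{B_{1/2}}(\mathrm{Id}) \to \mathbb{R}$, such that for every symmetric $3\times 3$ matrix $R$ with $|R - \mathrm{Id}| \leq 1/2$ one has $R = \sum_{\xi \in \Lambda} \gamma_\xi^2(R)\, (\xi \otimes \xi)$. -/

import Mathlib

set_option maxHeartbeats 1000000

noncomputable section Stmt8Aux

/-- Integer matrix: 29 times the nine unit vectors (20-21-29 Pythagorean triple). -/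
def w9 : Fin 9 → Fin 3 → ℤ :=
![![29,0,0], ![0,29,0], ![0,0,29],
  ![20,21,0], ![20,-21,0],
  ![0,20,21], ![0,20,-21],
  ![21,0,20], ![-21,0,20]]

def v9 : Fin 9 → Fin 3 → ℝ := fun k i => (w9 k i : ℝ) / 29

lemma v9_inj : Function.Injective v9 := by
  have hw : Function.Injective w9 := by decide
  intro k l h
  apply hw; funext i
  have h2 : ((w9 k i : ℝ)) / 29 = ((w9 l i : ℝ)) / 29 := congrFun h i
  have h3 : ((w9 k i : ℝ)) = ((w9 l i : ℝ)) := by linarith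
  exact_mod_cast h3

def h0 (R : Fin 3 → Fin 3 → ℝ) : ℝ :=
  R 0 0 - 400/841 * (5*(841/840 * R 0 1)^2 + 1/5) - 441/841 * (5*(841/840 * R 2 0)^2 + 1/5)

def h1 (R : Fin 3 → Fin 3 → ℝ) : ℝ :=
  R 1 1 - 441/841 * (5*(841/840 * R 0 1)^2 + 1/5) - 400/841 * (5*(841/840 * R 1 2)^2 + 1/5)

def h2 (R : Fin 3 → Fin 3 → ℝ) : ℝ :=
  R 2 2 - 441/841 * (5*(841/840 * R 1 2)^2 + 1/5) - 400/841 * (5*(841/840 * R 2 0)^2 + 1/5)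

def G : Fin 9 → (Fin 3 → Fin 3 → ℝ) → ℝ :=
![fun R => Real.sqrt (h0 R), fun R => Real.sqrt (h1 R), fun R => Real.sqrt (h2 R),
  fun R => (841/840 * R 0 1 + 1/5) * Real.sqrt (5/2),
  fun R => (841/840 * R 0 1 - 1/5) * Real.sqrt (5/2),
  fun R => (841/840 * R 1 2 + 1/5) * Real.sqrt (5/2),
  fun R => (841/840 * R 1 2 - 1/5) * Real.sqrt (5/2),
  fun R => (841/840 * R 2 0 + 1/5) * Real.sqrt (5/2),
  fun R => (841/840 * R 2 0 - 1/5) * Real.sqrt (5/2)]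

def γfun : (Fin 3 → ℝ) → (Fin 3 → Fin 3 → ℝ) → ℝ := fun ξ =>
  if ξ = v9 0 then G 0 else if ξ = v9 1 then G 1 else if ξ = v9 2 then G 2 else
  if ξ = v9 3 then G 3 else if ξ = v9 4 then G 4 else if ξ = v9 5 then G 5 else
  if ξ = v9 6 then G 6 else if ξ = v9 7 then G 7 else if ξ = v9 8 then G 8 else 0

lemma γfun_v9 (k : Fin 9) : γfun (v9 k) = G k := by
  fin_cases k <;> simp [γfun, v9_inj.eq_iff]

lemma S9 (f : Fin 9 → ℝ) : ∑ k, f k = f 0 + f 1 + f 2 + f 3 + f 4 + f 5 + f 6 + f 7 + f 8 := by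
  rw [Fin.sum_univ_succ, Fin.sum_univ_eight]
  simp only [show Fin.succ (0:Fin 8) = (1:Fin 9) from rfl, show Fin.succ (1:Fin 8) = (2:Fin 9) from rfl,
    show Fin.succ (2:Fin 8) = (3:Fin 9) from rfl, show Fin.succ (3:Fin 8) = (4:Fin 9) from rfl,
    show Fin.succ (4:Fin 8) = (5:Fin 9) from rfl, show Fin.succ (5:Fin 8) = (6:Fin 9) from rfl,
    show Fin.succ (6:Fin 8) = (7:Fin 9) from rfl, show Fin.succ (7:Fin 8) = (8:Fin 9) from rfl]
  ring

lemma w9_norm : ∀ k, (w9 k 0)^2 + (w9 k 1)^2 + (w9 k 2)^2 = 841 := by decide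

lemma key (a x y : ℝ) (h : (a-1)^2 + 2*x^2 + 2*y^2 ≤ 1/4) :
    1/100 ≤ a - 1/5 - 41209/15680 * x^2 - 41209/15680 * y^2 := by
  nlinarith [sq_nonneg (a - 1 + 2240/5887), sq_nonneg x, sq_nonneg y]

lemma sum_expand (R : Fin 3 → Fin 3 → ℝ) (hsym : ∀ i j, R i j = R j i)
    (hb : ∑ i, ∑ j, (R i j - if i = j then 1 else 0) ^ 2 ≤ 1/4) :
    (R 0 0 - 1)^2 + (R 1 1 - 1)^2 + (R 2 2 - 1)^2
      + 2*(R 0 1)^2 + 2*(R 1 2)^2 + 2*(R 2 0)^2 ≤ 1/4 := by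
  simp only [Fin.sum_univ_three,
    eq_false (by decide : ¬((0:Fin 3) = 2)), eq_false (by decide : ¬((1:Fin 3) = 2)),
    eq_false (by decide : ¬((2:Fin 3) = 0)), eq_false (by decide : ¬((2:Fin 3) = 1)),
    if_false] at hb
  norm_num at hb
  have e1 := hsym 1 0
  have e2 := hsym 2 1
  have e3 := hsym 0 2
  rw [e1, e2, e3] at hb
  nlinarith [hb]

lemma h0_pos (R : Fin 3 → Fin 3 → ℝ) (hsym : ∀ i j, R i j = R j i)
    (hb : ∑ i, ∑ j, (R i j - if i = j then 1 else 0) ^ 2 ≤ 1/4) : 1/100 ≤ h0 R := by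
  have h := sum_expand R hsym hb
  have k := key (R 0 0) (R 0 1) (R 2 0)
    (by nlinarith [sq_nonneg (R 1 1 - 1), sq_nonneg (R 2 2 - 1), sq_nonneg (R 1 2)])
  unfold h0
  nlinarith [sq_nonneg (R 0 1)]

lemma h1_pos (R : Fin 3 → Fin 3 → ℝ) (hsym : ∀ i j, R i j = R j i)
    (hb : ∑ i, ∑ j, (R i j - if i = j then 1 else 0) ^ 2 ≤ 1/4) : 1/100 ≤ h1 R := by
  have h := sum_expand R hsym hb
  have k := key (R 1 1) (R 0 1) (R 1 2)
    (by nlinarith [sq_nonneg (R 0 0 - 1), sq_nonneg (R 2 2 - 1), sq_nonneg (R 2 0)])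
  unfold h1
  nlinarith [sq_nonneg (R 1 2)]

lemma h2_pos (R : Fin 3 → Fin 3 → ℝ) (hsym : ∀ i j, R i j = R j i)
    (hb : ∑ i, ∑ j, (R i j - if i = j then 1 else 0) ^ 2 ≤ 1/4) : 1/100 ≤ h2 R := by
  have h := sum_expand R hsym hb
  have k := key (R 2 2) (R 1 2) (R 2 0)
    (by nlinarith [sq_nonneg (R 0 0 - 1), sq_nonneg (R 1 1 - 1), sq_nonneg (R 0 1)])
  unfold h2
  nlinarith [sq_nonneg (R 2 0)]

lemma apply_contDiff (i j : Fin 3) : ContDiff ℝ (⊤ : ℕ∞) (fun R : Fin 3 → Fin 3 → ℝ => R i j) :=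
  ((ContinuousLinearMap.proj j : (Fin 3 → ℝ) →L[ℝ] ℝ).contDiff).comp
    ((ContinuousLinearMap.proj i : (Fin 3 → Fin 3 → ℝ) →L[ℝ] (Fin 3 → ℝ)).contDiff)

lemma h0_contDiff : ContDiff ℝ (⊤ : ℕ∞) h0 :=
  ((apply_contDiff 0 0).sub (contDiff_const.mul
    ((contDiff_const.mul ((contDiff_const.mul (apply_contDiff 0 1)).pow 2)).add contDiff_const))).sub
    (contDiff_const.mul
    ((contDiff_const.mul ((contDiff_const.mul (apply_contDiff 2 0)).pow 2)).add contDiff_const))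

lemma h1_contDiff : ContDiff ℝ (⊤ : ℕ∞) h1 :=
  ((apply_contDiff 1 1).sub (contDiff_const.mul
    ((contDiff_const.mul ((contDiff_const.mul (apply_contDiff 0 1)).pow 2)).add contDiff_const))).sub
    (contDiff_const.mul
    ((contDiff_const.mul ((contDiff_const.mul (apply_contDiff 1 2)).pow 2)).add contDiff_const))

lemma h2_contDiff : ContDiff ℝ (⊤ : ℕ∞) h2 :=
  ((apply_contDiff 2 2).sub (contDiff_const.mul
    ((contDiff_const.mul ((contDiff_const.mul (apply_contDiff 1 2)).pow 2)).add contDiff_const))).sub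
    (contDiff_const.mul
    ((contDiff_const.mul ((contDiff_const.mul (apply_contDiff 2 0)).pow 2)).add contDiff_const))

lemma pair_contDiff (i j : Fin 3) (c : ℝ) :
    ContDiff ℝ (⊤ : ℕ∞) (fun R : Fin 3 → Fin 3 → ℝ => (841/840 * R i j + c) * Real.sqrt (5/2)) :=
  ((contDiff_const.mul (apply_contDiff i j)).add contDiff_const).mul contDiff_const

end Stmt8Aux

/-- First geometric lemma of convex integration: there is a finite set
`Λ ⊂ 𝕊² ∩ ℚ³` and smooth functions `γ_ξ` on the closed (Frobenius) ball of radius `1/2`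
around the identity in the space of symmetric `3×3` matrices, such that every symmetric
matrix `R` with `|R - Id| ≤ 1/2` decomposes as `R = ∑_{ξ ∈ Λ} γ_ξ(R)² ξ ⊗ ξ`. -/
theorem stmt_8 : ∃ (Λ : Finset (Fin 3 → ℝ))
    (γ : (Fin 3 → ℝ) → (Fin 3 → Fin 3 → ℝ) → ℝ),
    (∀ ξ ∈ Λ, (∑ i, (ξ i) ^ 2 = 1) ∧ ∀ i, ∃ q : ℚ, ξ i = (q : ℝ)) ∧
    (∀ ξ ∈ Λ, ContDiffOn ℝ (⊤ : ℕ∞) (γ ξ)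
      {R : Fin 3 → Fin 3 → ℝ | (∀ i j, R i j = R j i) ∧
        ∑ i, ∑ j, (R i j - if i = j then 1 else 0) ^ 2 ≤ 1/4}) ∧
    ∀ R : Fin 3 → Fin 3 → ℝ, (∀ i j, R i j = R j i) →
      (∑ i, ∑ j, (R i j - if i = j then 1 else 0) ^ 2) ≤ 1/4 →
      ∀ i j, R i j = ∑ ξ ∈ Λ, (γ ξ R) ^ 2 * (ξ i * ξ j) := by
  refine ⟨Finset.image v9 Finset.univ, γfun, ?_, ?_, ?_⟩
  · rintro ξ hξ
    obtain ⟨k, -, rfl⟩ := Finset.mem_image.mp hξ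
    refine ⟨?_, fun i => ⟨(w9 k i : ℚ)/29, by push_cast [v9]; ring⟩⟩
    have hn := w9_norm k
    have hn' : ((w9 k 0 : ℝ))^2 + ((w9 k 1 : ℝ))^2 + ((w9 k 2 : ℝ))^2 = 841 := by
      exact_mod_cast hn
    rw [Fin.sum_univ_three]
    simp only [v9]
    rw [div_pow, div_pow, div_pow]
    rw [← add_div, ← add_div, hn']
    norm_num
  · rintro ξ hξ
    obtain ⟨k, -, rfl⟩ := Finset.mem_image.mp hξ
    rw [γfun_v9]
    fin_cases k
    · exact h0_contDiff.contDiffOn.sqrt fun R hR =>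
        (lt_of_lt_of_le (by norm_num) (h0_pos R hR.1 hR.2)).ne'
    · exact h1_contDiff.contDiffOn.sqrt fun R hR =>
        (lt_of_lt_of_le (by norm_num) (h1_pos R hR.1 hR.2)).ne'
    · exact h2_contDiff.contDiffOn.sqrt fun R hR =>
        (lt_of_lt_of_le (by norm_num) (h2_pos R hR.1 hR.2)).ne'
    · exact (pair_contDiff 0 1 (1/5)).contDiffOn
    · exact (pair_contDiff 0 1 (-(1/5))).contDiffOn
    · exact (pair_contDiff 1 2 (1/5)).contDiffOn
    · exact (pair_contDiff 1 2 (-(1/5))).contDiffOn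
    · exact (pair_contDiff 2 0 (1/5)).contDiffOn
    · exact (pair_contDiff 2 0 (-(1/5))).contDiffOn
  · intro R hsym hb i j
    rw [Finset.sum_image (fun a _ b _ h => v9_inj h), S9]
    simp only [γfun_v9,
      show G 0 = (fun R => Real.sqrt (h0 R)) from rfl,
      show G 1 = (fun R => Real.sqrt (h1 R)) from rfl,
      show G 2 = (fun R => Real.sqrt (h2 R)) from rfl,
      show G 3 = (fun R => (841/840 * R 0 1 + 1/5) * Real.sqrt (5/2)) from rfl,
      show G 4 = (fun R => (841/840 * R 0 1 - 1/5) * Real.sqrt (5/2)) from rfl,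
      show G 5 = (fun R => (841/840 * R 1 2 + 1/5) * Real.sqrt (5/2)) from rfl,
      show G 6 = (fun R => (841/840 * R 1 2 - 1/5) * Real.sqrt (5/2)) from rfl,
      show G 7 = (fun R => (841/840 * R 2 0 + 1/5) * Real.sqrt (5/2)) from rfl,
      show G 8 = (fun R => (841/840 * R 2 0 - 1/5) * Real.sqrt (5/2)) from rfl]
    have hs0 : Real.sqrt (h0 R) ^ 2 = h0 R :=
      Real.sq_sqrt (le_trans (by norm_num) (h0_pos R hsym hb))
    have hs1 : Real.sqrt (h1 R) ^ 2 = h1 R :=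
      Real.sq_sqrt (le_trans (by norm_num) (h1_pos R hsym hb))
    have hs2 : Real.sqrt (h2 R) ^ 2 = h2 R :=
      Real.sq_sqrt (le_trans (by norm_num) (h2_pos R hsym hb))
    have hs5 : Real.sqrt ((5:ℝ)/2) ^ 2 = 5/2 := Real.sq_sqrt (by norm_num)
    have e1 : R 1 0 = R 0 1 := hsym 1 0
    have e2 : R 2 1 = R 1 2 := hsym 2 1
    have e3 : R 0 2 = R 2 0 := hsym 0 2
    have V00 : v9 0 0 = 1 := by norm_num [v9, show w9 0 0 = 29 from rfl]
    have V01 : v9 0 1 = 0 := by norm_num [v9, show w9 0 1 = 0 from rfl]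
    have V02 : v9 0 2 = 0 := by norm_num [v9, show w9 0 2 = 0 from rfl]
    have V10 : v9 1 0 = 0 := by norm_num [v9, show w9 1 0 = 0 from rfl]
    have V11 : v9 1 1 = 1 := by norm_num [v9, show w9 1 1 = 29 from rfl]
    have V12 : v9 1 2 = 0 := by norm_num [v9, show w9 1 2 = 0 from rfl]
    have V20 : v9 2 0 = 0 := by norm_num [v9, show w9 2 0 = 0 from rfl]
    have V21 : v9 2 1 = 0 := by norm_num [v9, show w9 2 1 = 0 from rfl]
    have V22 : v9 2 2 = 1 := by norm_num [v9, show w9 2 2 = 29 from rfl]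
    have V30 : v9 3 0 = 20/29 := by norm_num [v9, show w9 3 0 = 20 from rfl]
    have V31 : v9 3 1 = 21/29 := by norm_num [v9, show w9 3 1 = 21 from rfl]
    have V32 : v9 3 2 = 0 := by norm_num [v9, show w9 3 2 = 0 from rfl]
    have V40 : v9 4 0 = 20/29 := by norm_num [v9, show w9 4 0 = 20 from rfl]
    have V41 : v9 4 1 = -(21/29) := by norm_num [v9, show w9 4 1 = -21 from rfl]
    have V42 : v9 4 2 = 0 := by norm_num [v9, show w9 4 2 = 0 from rfl]
    have V50 : v9 5 0 = 0 := by norm_num [v9, show w9 5 0 = 0 from rfl]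
    have V51 : v9 5 1 = 20/29 := by norm_num [v9, show w9 5 1 = 20 from rfl]
    have V52 : v9 5 2 = 21/29 := by norm_num [v9, show w9 5 2 = 21 from rfl]
    have V60 : v9 6 0 = 0 := by norm_num [v9, show w9 6 0 = 0 from rfl]
    have V61 : v9 6 1 = 20/29 := by norm_num [v9, show w9 6 1 = 20 from rfl]
    have V62 : v9 6 2 = -(21/29) := by norm_num [v9, show w9 6 2 = -21 from rfl]
    have V70 : v9 7 0 = 21/29 := by norm_num [v9, show w9 7 0 = 21 from rfl]
    have V71 : v9 7 1 = 0 := by norm_num [v9, show w9 7 1 = 0 from rfl]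
    have V72 : v9 7 2 = 20/29 := by norm_num [v9, show w9 7 2 = 20 from rfl]
    have V80 : v9 8 0 = -(21/29) := by norm_num [v9, show w9 8 0 = -21 from rfl]
    have V81 : v9 8 1 = 0 := by norm_num [v9, show w9 8 1 = 0 from rfl]
    have V82 : v9 8 2 = 20/29 := by norm_num [v9, show w9 8 2 = 20 from rfl]
    have F0 : ∀ (h : (0:ℕ) < 3), (⟨0, h⟩ : Fin 3) = 0 := fun _ => rfl
    have F1 : ∀ (h : (1:ℕ) < 3), (⟨1, h⟩ : Fin 3) = 1 := fun _ => rfl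
    have F2 : ∀ (h : (2:ℕ) < 3), (⟨2, h⟩ : Fin 3) = 2 := fun _ => rfl
    fin_cases i <;> fin_cases j <;>
      simp only [F0, F1, F2] <;>
      simp only [V00, V01, V02, V10, V11, V12, V20, V21, V22, V30, V31, V32, V40, V41, V42,
        V50, V51, V52, V60, V61, V62, V70, V71, V72, V80, V81, V82,
        mul_pow, hs0, hs1, hs2, hs5] <;>
      simp only [h0, h1, h2, e1, e2, e3] <;>
      ring
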